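/- For n ≥ 2, the group VP_n is generated by the elements a_{k,l} and b_{k,l} with 2 ≤ k + l ≤ n and 1 ≤ k, l ≤ n−1, where elements a_{k,l}, b_{k,l} ∈ VP_{k+l} with k + l < n are regarded as elements of VP_n via the inclusion adding trivial strands at the end. -/

import Mathlib

/-- Index predicate for the generators `λ_{i j}` of the virtual pure braid group
`VP n`: `1 ≤ i, j ≤ n` and `i ≠ j` (1-based indices). -/
def VPIdx (n : ℕ) (p : ℕ × ℕ) : Prop :=
  1 ≤ p.1 ∧ p.1 ≤ n ∧ 1 ≤ p.2 ∧ p.2 ≤ n ∧ p.1 ≠ p.2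

instance (n : ℕ) (p : ℕ × ℕ) : Decidable (VPIdx n p) := by
  unfold VPIdx; infer_instance

/-- Generators `λ_{i j}`, `1 ≤ i ≠ j ≤ n`. -/
def VPGen (n : ℕ) := {p : ℕ × ℕ // VPIdx n p}

/-- The generator `λ_{i j}` as an element of the free group (junk value `1` out of range). -/
def lamW {n : ℕ} (i j : ℕ) : FreeGroup (VPGen n) :=
  if h : VPIdx n (i, j) then FreeGroup.of ⟨(i, j), h⟩ else 1

/-- The defining relations of the virtual pure braid group `VP n`:
`λ_{ij}λ_{kl} = λ_{kl}λ_{ij}` and `λ_{ki}λ_{kj}λ_{ij} = λ_{ij}λ_{kj}λ_{ki}`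
(distinct letters denote distinct indices). -/
def VPRels (n : ℕ) : Set (FreeGroup (VPGen n)) :=
  {w | ∃ i j k l : ℕ, VPIdx n (i, j) ∧ VPIdx n (k, l) ∧ i ≠ k ∧ i ≠ l ∧ j ≠ k ∧ j ≠ l ∧
      w = lamW i j * lamW k l * (lamW k l * lamW i j)⁻¹} ∪
  {w | ∃ i j k : ℕ, VPIdx n (i, j) ∧ VPIdx n (k, i) ∧ VPIdx n (k, j) ∧
      w = lamW k i * lamW k j * lamW i j * (lamW i j * lamW k j * lamW k i)⁻¹}

/-- The virtual pure braid group on `n` strands. -/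
abbrev VP (n : ℕ) := PresentedGroup (VPRels n)

/-- The generator `λ_{i j}` of `VP n` (junk value `1` out of range). -/
def lam' {n : ℕ} (i j : ℕ) : VP n :=
  if h : VPIdx n (i, j) then PresentedGroup.of ⟨(i, j), h⟩ else 1

/-- The product `λ_{1 l} λ_{2 l} ⋯ λ_{k-1, l}`. -/
def conjA {n : ℕ} (k l : ℕ) : VP n :=
  ((List.range (k - 1)).map fun j => lam' (j + 1) l).prod

/-- The product `λ_{l 1}⁻¹ λ_{l 2}⁻¹ ⋯ λ_{l, k-1}⁻¹`. -/
def conjB {n : ℕ} (k l : ℕ) : VP n :=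
  ((List.range (k - 1)).map fun j => (lam' l (j + 1))⁻¹).prod

/-- `s` is the family of degeneracy (strand-doubling) homomorphisms
`s_i : VP m → VP (m+1)` (`0 ≤ i ≤ m-1`), acting on the generators by the explicit
cabling formulas of Proposition 3.1 of Bardakov–Mikhailov–Wu. -/
def IsCabling (s : ∀ m : ℕ, ℕ → (VP m →* VP (m + 1))) : Prop :=
  ∀ m k l i : ℕ, 1 ≤ k → k < l → l ≤ m → i < m →
    (s m i (lam' k l) =
      if i + 1 < k then lam' (k + 1) (l + 1)
      else if i + 1 = k then lam' k (l + 1) * lam' (k + 1) (l + 1)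
      else if i + 1 < l then lam' k (l + 1)
      else if i + 1 = l then (conjA k l)⁻¹ * lam' k (l + 1) * conjA k l * lam' k l
      else lam' k l) ∧
    (s m i (lam' l k) =
      if i + 1 < k then lam' (l + 1) (k + 1)
      else if i + 1 = k then lam' (l + 1) (k + 1) * lam' (l + 1) k
      else if i + 1 < l then lam' (l + 1) k
      else if i + 1 = l then lam' l k * ((conjB k l)⁻¹ * lam' (l + 1) k * conjB k l)
      else lam' l k)

/-- `d` is the family of face (strand-deleting) homomorphisms
`d_i : VP (m+1) → VP m` (`0 ≤ i ≤ m`), acting on the generators by the formulas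
of Proposition 3.1 of Bardakov–Mikhailov–Wu. -/
def IsFace (d : ∀ m : ℕ, ℕ → (VP (m + 1) →* VP m)) : Prop :=
  ∀ m k l i : ℕ, 1 ≤ k → k < l → l ≤ m + 1 → i ≤ m →
    (d m i (lam' k l) =
      if i + 1 < k then lam' (k - 1) (l - 1)
      else if i + 1 = k then 1
      else if i + 1 < l then lam' k (l - 1)
      else if i + 1 = l then 1
      else lam' k l) ∧
    (d m i (lam' l k) =
      if i + 1 < k then lam' (l - 1) (k - 1)
      else if i + 1 = k then 1
      else if i + 1 < l then lam' (l - 1) k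
      else if i + 1 = l then 1
      else lam' l k)

/-- `ι` is the family of trivial-strand inclusions `VP m → VP (m+1)`, `λ_{ij} ↦ λ_{ij}`. -/
def IsIncl (ι : ∀ m : ℕ, VP m →* VP (m + 1)) : Prop :=
  ∀ m i j : ℕ, VPIdx m (i, j) → ι m (lam' i j) = lam' i j

/-- Iterated trivial-strand inclusion `VP p → VP (p + q)`. -/
def iotaIter (ι : ∀ m : ℕ, VP m →* VP (m + 1)) (p : ℕ) : (q : ℕ) → (VP p →* VP (p + q))
  | 0 => MonoidHom.id (VP p)
  | q + 1 => (ι (p + q)).comp (iotaIter ι p q)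

/-- The composite `s_{m} s_{m-1} ⋯ s_{skip+1} ŝ_{skip} s_{skip-1} ⋯ s_0 : VP 2 → VP (m+2)`
of `m` degeneracies with the index `skip` omitted. -/
def chain (s : ∀ m : ℕ, ℕ → (VP m →* VP (m + 1))) (skip : ℕ) :
    (m : ℕ) → (VP 2 →* VP (m + 2))
  | 0 => MonoidHom.id (VP 2)
  | m + 1 => (s (m + 2) (if skip ≤ m then m + 1 else m)).comp (chain s skip m)

/-- The cabled element `a_{k, n+2-k} = s_{n+1-1}⋯s_k ŝ_{k-1} s_{k-2}⋯s_0(λ_{1,2}) ∈ VP (n+2)`. -/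
def aa (s : ∀ m : ℕ, ℕ → (VP m →* VP (m + 1))) (n k : ℕ) : VP (n + 2) :=
  chain s (k - 1) n (lam' 1 2)

/-- The cabled element `b_{k, n+2-k} = s_{n+1-1}⋯s_k ŝ_{k-1} s_{k-2}⋯s_0(λ_{2,1}) ∈ VP (n+2)`. -/
def bb (s : ∀ m : ℕ, ℕ → (VP m →* VP (m + 1))) (n k : ℕ) : VP (n + 2) :=
  chain s (k - 1) n (lam' 2 1)

/-- The simplicial subgroups `T_m ≤ VP (m+1)`:
`T_0 = 1`, `T_1 = VP 2`, `T_{m+2} = ⟨s_0(T_{m+1}), …, s_{m+1}(T_{m+1})⟩`. -/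
def TT (s : ∀ m : ℕ, ℕ → (VP m →* VP (m + 1))) : (m : ℕ) → Subgroup (VP (m + 1))
  | 0 => ⊥
  | 1 => ⊤
  | m + 2 => ⨆ i ∈ Finset.range (m + 2), Subgroup.map (s (m + 2) i) (TT s (m + 1))

/-!
The degeneracies `s_0, …, s_{k-2}` turn `λ_{12}` into the column
`colProd k (k + 1) = λ_{1,k+1} ⋯ λ_{k,k+1}`, and each further `s_i` (`i ≥ k`) doubles the last
strand, which multiplies on the left by the next column. Hence
`a_{k,l} = cabledA k l = colProd k (k + l) ⋯ colProd k (k + 1)`, and symmetrically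
`b_{k,l} = cabledB k l` is a product of the rows `rowProd k c = λ_{ck} ⋯ λ_{c1}`. Quotients of
consecutive `a`'s (resp. `b`'s) are the columns (resp. rows), and quotients of consecutive columns
or rows are the generators `λ_{ij}`.
-/

theorem VPIdx.mono {m m' : ℕ} {p : ℕ × ℕ} (h : VPIdx m p) (hm : m ≤ m') : VPIdx m' p := by
  obtain ⟨h₁, h₂, h₃, h₄, h₅⟩ := h
  exact ⟨h₁, h₂.trans hm, h₃, h₄.trans hm, h₅⟩

namespace VirtualPureBraid

def colProd {n : ℕ} : ℕ → ℕ → VP n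
  | 0, _ => 1
  | k + 1, c => colProd k c * lam' (k + 1) c

def rowProd {n : ℕ} : ℕ → ℕ → VP n
  | 0, _ => 1
  | k + 1, c => lam' c (k + 1) * rowProd k c

def cabledA {n : ℕ} (k : ℕ) : ℕ → VP n
  | 0 => 1
  | l + 1 => colProd k (k + l + 1) * cabledA k l

def cabledB {n : ℕ} (k : ℕ) : ℕ → VP n
  | 0 => 1
  | l + 1 => cabledB k l * rowProd k (k + l + 1)

theorem conjA_eq_colProd {n : ℕ} (k c : ℕ) : (conjA k c : VP n) = colProd (k - 1) c := by
  unfold conjA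
  induction k - 1 with
  | zero => rfl
  | succ t ih => rw [List.prod_range_succ, ih, colProd]

theorem conjB_eq_inv_rowProd {n : ℕ} (k c : ℕ) : (conjB k c : VP n) = (rowProd (k - 1) c)⁻¹ := by
  unfold conjB
  induction k - 1 with
  | zero => exact inv_one.symm
  | succ t ih => rw [List.prod_range_succ, ih, rowProd, mul_inv_rev]

theorem map_colProd_of_fix {M N B : ℕ} (f : VP M →* VP N)
    (hf : ∀ a b, VPIdx B (a, b) → f (lam' a b) = lam' a b) {c : ℕ} (hc : c ≤ B) :
    ∀ j, j < c → f (colProd j c) = colProd j c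
  | 0, _ => map_one f
  | j + 1, hj => by
    rw [colProd, map_mul, map_colProd_of_fix f hf hc j (by omega),
      hf _ _ ⟨by omega, by omega, by omega, hc, by omega⟩, colProd]

theorem map_rowProd_of_fix {M N B : ℕ} (f : VP M →* VP N)
    (hf : ∀ a b, VPIdx B (a, b) → f (lam' a b) = lam' a b) {c : ℕ} (hc : c ≤ B) :
    ∀ j, j < c → f (rowProd j c) = rowProd j c
  | 0, _ => map_one f
  | j + 1, hj => by
    rw [rowProd, map_mul, map_rowProd_of_fix f hf hc j (by omega),
      hf _ _ ⟨by omega, hc, by omega, by omega, by omega⟩, rowProd]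

theorem map_cabledA_of_fix {M N B : ℕ} (f : VP M →* VP N)
    (hf : ∀ a b, VPIdx B (a, b) → f (lam' a b) = lam' a b) (k : ℕ) :
    ∀ l, k + l ≤ B → f (cabledA k l) = cabledA k l
  | 0, _ => map_one f
  | l + 1, h => by
    rw [cabledA, map_mul, map_colProd_of_fix f hf (by omega) k (by omega),
      map_cabledA_of_fix f hf k l (by omega), cabledA]

theorem map_cabledB_of_fix {M N B : ℕ} (f : VP M →* VP N)
    (hf : ∀ a b, VPIdx B (a, b) → f (lam' a b) = lam' a b) (k : ℕ) :
    ∀ l, k + l ≤ B → f (cabledB k l) = cabledB k l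
  | 0, _ => map_one f
  | l + 1, h => by
    rw [cabledB, map_mul, map_rowProd_of_fix f hf (by omega) k (by omega),
      map_cabledB_of_fix f hf k l (by omega), cabledB]

end VirtualPureBraid

namespace IsCabling

open VirtualPureBraid

variable {s : ∀ m : ℕ, ℕ → (VP m →* VP (m + 1))}

theorem map_lam_of_le (hs : IsCabling s) {M i a b : ℕ} (hab : VPIdx i (a, b)) (hi : i < M) :
    s M i (lam' a b) = lam' a b := by
  obtain ⟨ha, hai, hb, hbi, hne⟩ := hab
  rcases lt_or_gt_of_ne hne with h | h
  · rw [(hs M a b i ha h (by omega) hi).1]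
    split_ifs <;> first | rfl | omega
  · rw [(hs M b a i hb h (by omega) hi).2]
    split_ifs <;> first | rfl | omega

theorem map_lam_shift (hs : IsCabling s) {M i a b : ℕ} (ha : 1 ≤ a) (hai : a ≤ i)
    (hib : i + 1 < b) (hbM : b ≤ M) :
    s M i (lam' a b) = lam' a (b + 1) ∧ s M i (lam' b a) = lam' (b + 1) a := by
  obtain ⟨h₁, h₂⟩ := hs M a b i ha (by omega) hbM (by omega)
  constructor
  · rw [h₁]; split_ifs <;> first | rfl | omega
  · rw [h₂]; split_ifs <;> first | rfl | omega

theorem map_lam_head (hs : IsCabling s) {M i b : ℕ} (hib : i + 1 < b) (hbM : b ≤ M) :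
    s M i (lam' (i + 1) b) = lam' (i + 1) (b + 1) * lam' (i + 2) (b + 1) ∧
      s M i (lam' b (i + 1)) = lam' (b + 1) (i + 2) * lam' (b + 1) (i + 1) := by
  obtain ⟨h₁, h₂⟩ := hs M (i + 1) b i (by omega) hib hbM (by omega)
  exact ⟨by rw [h₁, if_neg (by omega), if_pos rfl], by rw [h₂, if_neg (by omega), if_pos rfl]⟩

theorem map_lam_last (hs : IsCabling s) {M i a : ℕ} (ha : 1 ≤ a) (hai : a ≤ i) (hiM : i < M) :
    s M i (lam' a (i + 1)) =
        (colProd (a - 1) (i + 1))⁻¹ * lam' a (i + 2) * colProd (a - 1) (i + 1) * lam' a (i + 1) ∧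
      s M i (lam' (i + 1) a) =
        lam' (i + 1) a *
          (rowProd (a - 1) (i + 1) * lam' (i + 2) a * (rowProd (a - 1) (i + 1))⁻¹) := by
  obtain ⟨h₁, h₂⟩ := hs M a (i + 1) i ha (by omega) hiM hiM
  constructor
  · rw [h₁, if_neg (by omega), if_neg (by omega), if_neg (by omega), if_pos rfl,
      conjA_eq_colProd]
  · rw [h₂, if_neg (by omega), if_neg (by omega), if_neg (by omega), if_pos rfl,
      conjB_eq_inv_rowProd, inv_inv]

theorem map_colProd_last (hs : IsCabling s) {M c : ℕ} (hc : c < M) :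
    ∀ j, j ≤ c → s M c (colProd j (c + 1)) = colProd j (c + 2) * colProd j (c + 1)
  | 0, _ => by simp [colProd]
  | j + 1, hj => by
    rw [colProd, map_mul, hs.map_colProd_last hc j (by omega),
      (hs.map_lam_last (by omega) (by omega) hc).1, Nat.add_sub_cancel, colProd, colProd]
    group

theorem map_rowProd_last (hs : IsCabling s) {M c : ℕ} (hc : c < M) :
    ∀ j, j ≤ c → s M c (rowProd j (c + 1)) = rowProd j (c + 1) * rowProd j (c + 2)
  | 0, _ => by simp [rowProd]
  | j + 1, hj => by
    rw [rowProd, map_mul, hs.map_rowProd_last hc j (by omega),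
      (hs.map_lam_last (by omega) (by omega) hc).2, Nat.add_sub_cancel, rowProd, rowProd]
    group

theorem map_colProd_shift (hs : IsCabling s) {M i c : ℕ} (hic : i + 1 < c) (hc : c ≤ M) :
    ∀ j, j ≤ i → s M i (colProd j c) = colProd j (c + 1)
  | 0, _ => map_one _
  | j + 1, hj => by
    rw [colProd, map_mul, hs.map_colProd_shift hic hc j (by omega),
      (hs.map_lam_shift (by omega) hj hic hc).1, colProd]

theorem map_rowProd_shift (hs : IsCabling s) {M i c : ℕ} (hic : i + 1 < c) (hc : c ≤ M) :
    ∀ j, j ≤ i → s M i (rowProd j c) = rowProd j (c + 1)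
  | 0, _ => map_one _
  | j + 1, hj => by
    rw [rowProd, map_mul, hs.map_rowProd_shift hic hc j (by omega),
      (hs.map_lam_shift (by omega) hj hic hc).2, rowProd]

theorem map_colProd_diag (hs : IsCabling s) {M i : ℕ} (hi : i + 2 ≤ M) :
    s M i (colProd (i + 1) (i + 2)) = colProd (i + 2) (i + 3) := by
  rw [colProd, map_mul, hs.map_colProd_shift (by omega) hi i le_rfl,
    (hs.map_lam_head (by omega) hi).1, ← mul_assoc]
  rfl

theorem map_rowProd_diag (hs : IsCabling s) {M i : ℕ} (hi : i + 2 ≤ M) :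
    s M i (rowProd (i + 1) (i + 2)) = rowProd (i + 2) (i + 3) := by
  rw [rowProd, map_mul, hs.map_rowProd_shift (by omega) hi i le_rfl,
    (hs.map_lam_head (by omega) hi).2, mul_assoc]
  rfl

theorem map_cabledA_succ (hs : IsCabling s) {M k l : ℕ} (h : k + l < M) :
    s M (k + l) (cabledA k (l + 1)) = cabledA k (l + 2) := by
  rw [cabledA, map_mul, hs.map_colProd_last h k (by omega),
    map_cabledA_of_fix _ (fun a b hab => hs.map_lam_of_le hab h) k l le_rfl, mul_assoc]
  rfl

theorem map_cabledB_succ (hs : IsCabling s) {M k l : ℕ} (h : k + l < M) :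
    s M (k + l) (cabledB k (l + 1)) = cabledB k (l + 2) := by
  rw [cabledB, map_mul, hs.map_rowProd_last h k (by omega),
    map_cabledB_of_fix _ (fun a b hab => hs.map_lam_of_le hab h) k l le_rfl, ← mul_assoc]
  rfl

theorem chain_lam_one_two_of_le_skip (hs : IsCabling s) {skip : ℕ} :
    ∀ m, m ≤ skip → chain s skip m (lam' 1 2) = colProd (m + 1) (m + 2)
  | 0, _ => (one_mul _).symm
  | m + 1, hm => by
    rw [chain, MonoidHom.comp_apply, if_neg (by omega),
      hs.chain_lam_one_two_of_le_skip m (by omega), hs.map_colProd_diag le_rfl]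

theorem chain_lam_two_one_of_le_skip (hs : IsCabling s) {skip : ℕ} :
    ∀ m, m ≤ skip → chain s skip m (lam' 2 1) = rowProd (m + 1) (m + 2)
  | 0, _ => (mul_one _).symm
  | m + 1, hm => by
    rw [chain, MonoidHom.comp_apply, if_neg (by omega),
      hs.chain_lam_two_one_of_le_skip m (by omega), hs.map_rowProd_diag le_rfl]

theorem chain_lam_one_two_of_skip_le (hs : IsCabling s) {skip m : ℕ} (h : skip ≤ m) :
    chain s skip m (lam' 1 2) = cabledA (skip + 1) (m + 1 - skip) := by
  induction m, h using Nat.le_induction with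
  | base => rw [hs.chain_lam_one_two_of_le_skip skip le_rfl, Nat.add_sub_cancel_left, cabledA,
      cabledA, mul_one]
  | succ m hm ih =>
    have key := hs.map_cabledA_succ (M := m + 2) (k := skip + 1) (l := m - skip) (by omega)
    rw [show skip + 1 + (m - skip) = m + 1 by omega] at key
    rw [chain, MonoidHom.comp_apply, if_pos hm, ih, show m + 1 - skip = m - skip + 1 by omega,
      key, show m + 1 + 1 - skip = m - skip + 2 by omega]

theorem chain_lam_two_one_of_skip_le (hs : IsCabling s) {skip m : ℕ} (h : skip ≤ m) :
    chain s skip m (lam' 2 1) = cabledB (skip + 1) (m + 1 - skip) := by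
  induction m, h using Nat.le_induction with
  | base => rw [hs.chain_lam_two_one_of_le_skip skip le_rfl, Nat.add_sub_cancel_left, cabledB,
      cabledB, one_mul]
  | succ m hm ih =>
    have key := hs.map_cabledB_succ (M := m + 2) (k := skip + 1) (l := m - skip) (by omega)
    rw [show skip + 1 + (m - skip) = m + 1 by omega] at key
    rw [chain, MonoidHom.comp_apply, if_pos hm, ih, show m + 1 - skip = m - skip + 1 by omega,
      key, show m + 1 + 1 - skip = m - skip + 2 by omega]

theorem aa_eq_cabledA (hs : IsCabling s) {j k : ℕ} (hk : 1 ≤ k) (hkj : k ≤ j + 1) :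
    aa s j k = cabledA k (j + 2 - k) := by
  rw [aa, hs.chain_lam_one_two_of_skip_le (by omega), Nat.sub_add_cancel hk]
  congr 1
  omega

theorem bb_eq_cabledB (hs : IsCabling s) {j k : ℕ} (hk : 1 ≤ k) (hkj : k ≤ j + 1) :
    bb s j k = cabledB k (j + 2 - k) := by
  rw [bb, hs.chain_lam_two_one_of_skip_le (by omega), Nat.sub_add_cancel hk]
  congr 1
  omega

end IsCabling

namespace IsIncl

open VirtualPureBraid

variable {ι : ∀ m : ℕ, VP m →* VP (m + 1)}

theorem iotaIter_lam (hι : IsIncl ι) {p a b : ℕ} (hab : VPIdx p (a, b)) :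
    ∀ q, iotaIter ι p q (lam' a b) = lam' a b
  | 0 => rfl
  | q + 1 => by
    rw [iotaIter, MonoidHom.comp_apply, hι.iotaIter_lam hab q, hι _ _ _ (hab.mono (by omega))]

theorem iotaIter_cabledA (hι : IsIncl ι) {p k l : ℕ} (h : k + l ≤ p) (q : ℕ) :
    iotaIter ι p q (cabledA k l) = cabledA k l :=
  map_cabledA_of_fix _ (fun _ _ hab => hι.iotaIter_lam hab q) k l h

theorem iotaIter_cabledB (hι : IsIncl ι) {p k l : ℕ} (h : k + l ≤ p) (q : ℕ) :
    iotaIter ι p q (cabledB k l) = cabledB k l :=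
  map_cabledB_of_fix _ (fun _ _ hab => hι.iotaIter_lam hab q) k l h

end IsIncl

namespace VirtualPureBraid

variable {n : ℕ} (H : Subgroup (VP n))

theorem eq_top_of_lam_mem (h : ∀ i j, VPIdx n (i, j) → lam' i j ∈ H) : H = ⊤ := by
  rw [eq_top_iff, ← PresentedGroup.closure_range_of (VPRels n), Subgroup.closure_le]
  rintro - ⟨⟨⟨i, j⟩, hij⟩, rfl⟩
  simpa [lam', dif_pos hij] using h i j hij

theorem colProd_mem (hA : ∀ k l, 1 ≤ k → 1 ≤ l → k + l ≤ n → cabledA k l ∈ H)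
    {j c : ℕ} (hjc : j < c) (hc : c ≤ n) : colProd j c ∈ H := by
  obtain ⟨l, rfl⟩ : ∃ l, c = j + l + 1 := ⟨c - j - 1, by omega⟩
  rcases Nat.eq_zero_or_pos j with rfl | hj
  · exact H.one_mem
  have hA' : ∀ l, j + l ≤ n → cabledA j l ∈ H
    | 0, _ => H.one_mem
    | l + 1, h => hA j (l + 1) hj (by omega) h
  have quot : (colProd j (j + l + 1) : VP n) = cabledA j (l + 1) * (cabledA j l)⁻¹ := by
    rw [cabledA, mul_inv_cancel_right]
  rw [quot]
  exact H.mul_mem (hA' (l + 1) hc) (H.inv_mem (hA' l (by omega)))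

theorem rowProd_mem (hB : ∀ k l, 1 ≤ k → 1 ≤ l → k + l ≤ n → cabledB k l ∈ H)
    {j c : ℕ} (hjc : j < c) (hc : c ≤ n) : rowProd j c ∈ H := by
  obtain ⟨l, rfl⟩ : ∃ l, c = j + l + 1 := ⟨c - j - 1, by omega⟩
  rcases Nat.eq_zero_or_pos j with rfl | hj
  · exact H.one_mem
  have hB' : ∀ l, j + l ≤ n → cabledB j l ∈ H
    | 0, _ => H.one_mem
    | l + 1, h => hB j (l + 1) hj (by omega) h
  have quot : (rowProd j (j + l + 1) : VP n) = (cabledB j l)⁻¹ * cabledB j (l + 1) := by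
    rw [cabledB, inv_mul_cancel_left]
  rw [quot]
  exact H.mul_mem (H.inv_mem (hB' l (by omega))) (hB' (l + 1) hc)

theorem eq_top_of_cabled_mem (hA : ∀ k l, 1 ≤ k → 1 ≤ l → k + l ≤ n → cabledA k l ∈ H)
    (hB : ∀ k l, 1 ≤ k → 1 ≤ l → k + l ≤ n → cabledB k l ∈ H) : H = ⊤ := by
  refine eq_top_of_lam_mem H fun i j ⟨hi, hin, hj, hjn, hij⟩ => ?_
  rcases lt_or_gt_of_ne hij with hlt | hgt
  · obtain ⟨i, rfl⟩ : ∃ i', i = i' + 1 := ⟨i - 1, by omega⟩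
    have quot : (lam' (i + 1) j : VP n) = (colProd i j)⁻¹ * colProd (i + 1) j := by
      rw [colProd, inv_mul_cancel_left]
    rw [quot]
    exact H.mul_mem (H.inv_mem (colProd_mem H hA (by omega) hjn)) (colProd_mem H hA hlt hjn)
  · obtain ⟨j, rfl⟩ : ∃ j', j = j' + 1 := ⟨j - 1, by omega⟩
    have quot : (lam' i (j + 1) : VP n) = rowProd (j + 1) i * (rowProd j i)⁻¹ := by
      rw [rowProd, mul_inv_cancel_right]
    rw [quot]
    exact H.mul_mem (rowProd_mem H hB hgt hin) (H.inv_mem (rowProd_mem H hB (by omega) hin))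

end VirtualPureBraid

open VirtualPureBraid

theorem VP_generated_by_cabled_general (s : ∀ m : ℕ, ℕ → (VP m →* VP (m + 1)))
    (ι : ∀ m : ℕ, VP m →* VP (m + 1)) (hs : IsCabling s) (hι : IsIncl ι)
    (n : ℕ) :
    Subgroup.closure
      {x : VP n | ∃ j k : ℕ, 1 ≤ k ∧ k ≤ j + 1 ∧ j + 2 ≤ n ∧
        (HEq x (iotaIter ι (j + 2) (n - (j + 2)) (aa s j k)) ∨
         HEq x (iotaIter ι (j + 2) (n - (j + 2)) (bb s j k)))} = ⊤ := by
  refine eq_top_of_cabled_mem _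
    (fun k l hk hl hkl => Subgroup.subset_closure ⟨k + l - 2, k, hk, by omega, by omega, .inl ?_⟩)
    (fun k l hk hl hkl => Subgroup.subset_closure ⟨k + l - 2, k, hk, by omega, by omega, .inr ?_⟩)
  · rw [hs.aa_eq_cabledA hk (by omega), show k + l - 2 + 2 - k = l by omega,
      hι.iotaIter_cabledA (by omega)]
    exact congr_arg_heq (fun N => (cabledA k l : VP N)) (by omega)
  · rw [hs.bb_eq_cabledB hk (by omega), show k + l - 2 + 2 - k = l by omega,
      hι.iotaIter_cabledB (by omega)]
    exact congr_arg_heq (fun N => (cabledB k l : VP N)) (by omega)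

/-- (Proposition 3.3(2).) For `n ≥ 2`, the group `VP n` is generated
by the cabled elements `a_{k,l}` and `b_{k,l}` with `2 ≤ k + l ≤ n`, `1 ≤ k, l`,
where elements of `VP (k+l)` are regarded in `VP n` via the iterated trivial-strand
inclusion (here `k + l = j + 2`, `1 ≤ k ≤ j + 1`). -/
theorem VP_generated_by_cabled (s : ∀ m : ℕ, ℕ → (VP m →* VP (m + 1)))
    (ι : ∀ m : ℕ, VP m →* VP (m + 1)) (hs : IsCabling s) (hι : IsIncl ι)
    (n : ℕ) (hn : 2 ≤ n) :
    Subgroup.closure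
      {x : VP n | ∃ j k : ℕ, 1 ≤ k ∧ k ≤ j + 1 ∧ j + 2 ≤ n ∧
        (HEq x (iotaIter ι (j + 2) (n - (j + 2)) (aa s j k)) ∨
         HEq x (iotaIter ι (j + 2) (n - (j + 2)) (bb s j k)))} = ⊤ :=
  VP_generated_by_cabled_general s ι hs hι n
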